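/- arXiv:1610.05839 — 2 statements merged into one kernel-verified Lean document; each statement's English description precedes it below -/
import Mathlib

section
/- Let k and ℓ be positive integers with k+ℓ ≥ 3, let D be a digraph on n vertices with a Hamiltonian directed cycle C = v₀, v₁, ..., v_{n−1}, v₀, and let G be the underlying graph of D. Suppose δ(G) ≥ k+ℓ (so in particular n ≥ k+ℓ+1) and D contains no cycle with two blocks c(k,ℓ). Then there is no index r such that v_r v_{r+k+1} is an edge of G or v_r v_{r+ℓ+1} is an edge of G (indices taken modulo n). -/
universe u

/-- The underlying simple graph of the (simple) digraph with arc relation `A`. -/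
def underlying {V : Type u} (A : V → V → Prop) : SimpleGraph V where
  Adj x y := x ≠ y ∧ (A x y ∨ A y x)
  symm := ⟨fun _ _ h => ⟨h.1.symm, h.2.symm⟩⟩
  loopless := ⟨fun _ h => h.1 rfl⟩

/-- `p` is a directed path of length `n` in the digraph `A`: its `n + 1` vertices
are pairwise distinct, and consecutive vertices are joined by arcs of `A`. -/
def IsDipath {V : Type u} (A : V → V → Prop) {n : ℕ} (p : Fin (n + 1) → V) : Prop :=
  Function.Injective p ∧ ∀ i : Fin n, A (p i.castSucc) (p i.succ)

/-- The digraph `A` contains a cycle with two blocks `c(k, l)`: two internally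
vertex-disjoint directed paths, of lengths at least `k` and at least `l`
respectively, from a common start vertex to a common (different) end vertex. -/
def HasTwoBlockCycle {V : Type u} (A : V → V → Prop) (k l : ℕ) : Prop :=
  ∃ (m n : ℕ) (p : Fin (m + 1) → V) (q : Fin (n + 1) → V),
    k ≤ m ∧ l ≤ n ∧ IsDipath A p ∧ IsDipath A q ∧
    p 0 = q 0 ∧ p (Fin.last m) = q (Fin.last n) ∧
    p 0 ≠ p (Fin.last m) ∧
    ∀ (i : Fin (m + 1)) (j : Fin (n + 1)),
      p i = q j → (i = 0 ∧ j = 0) ∨ (i = Fin.last m ∧ j = Fin.last n)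

/-- `c` is a directed cycle of length `n + 1` (so of length at least `2`) in the
digraph `A`: its `n + 1` vertices are pairwise distinct and consecutive vertices
(cyclically) are joined by arcs of `A`. -/
def IsCycle {V : Type u} (A : V → V → Prop) (n : ℕ) (c : Fin (n + 1) → V) : Prop :=
  1 ≤ n ∧ Function.Injective c ∧ ∀ i : Fin (n + 1), A (c i) (c (i + 1))

/-- `c` is a Hamiltonian directed cycle of the digraph `A`. -/
def IsHamCycle {V : Type u} (A : V → V → Prop) (n : ℕ) (c : Fin (n + 1) → V) : Prop :=
  IsCycle A n c ∧ Function.Surjective c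

open Fin.NatCast

/-!
Index the vertices by their offset from `c r` along the Hamiltonian cycle. A chord between
offsets `0` and `k + 1`, together with arcs of the cycle and one further arc leaving the window
of offsets `0, …, k + l - 1` from a suitable vertex (offset `k` for a forward chord, `k - 1` for
a backward one), always contains a two-block cycle `c(k, l)`. So all neighbours of that vertex
lie in the window, and its degree is at most `k + l - 1`. The one exception, the arc from
offset `k - 1` to offset `k + l` next to a backward chord, is itself a forward chord of length
`l + 1`, which is excluded first. For `l = 1` a forward chord and the cycle already form
`c(k + 1, 1)`.
-/

section

variable {V : Type u} {A : V → V → Prop}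

namespace HasTwoBlockCycle

theorem symm {k l : ℕ} (h : HasTwoBlockCycle A k l) : HasTwoBlockCycle A l k := by
  obtain ⟨m, n, p, q, hkm, hln, hp, hq, hstart, hend, hne, hdisj⟩ := h
  refine ⟨n, m, q, p, hln, hkm, hq, hp, hstart.symm, hend.symm, hstart ▸ hend ▸ hne, ?_⟩
  intro j i hji
  exact (hdisj i j hji.symm).imp And.symm And.symm

theorem mono {k l k' l' : ℕ} (h : HasTwoBlockCycle A k l) (hk : k' ≤ k) (hl : l' ≤ l) :
    HasTwoBlockCycle A k' l' := by
  obtain ⟨m, n, p, q, hkm, hln, rest⟩ := h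
  exact ⟨m, n, p, q, hk.trans hkm, hl.trans hln, rest⟩

theorem of_nat_paths {L M : ℕ} {p q : ℕ → V}
    (hp : ∀ i ≤ L, ∀ i' ≤ L, p i = p i' → i = i')
    (hq : ∀ j ≤ M, ∀ j' ≤ M, q j = q j' → j = j')
    (hpA : ∀ i < L, A (p i) (p (i + 1))) (hqA : ∀ j < M, A (q j) (q (j + 1)))
    (hstart : p 0 = q 0) (hend : p L = q M) (hne : p 0 ≠ p L)
    (hdisj : ∀ i ≤ L, ∀ j ≤ M, p i = q j → i = 0 ∧ j = 0 ∨ i = L ∧ j = M) :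
    HasTwoBlockCycle A L M := by
  refine ⟨L, M, fun i => p i, fun j => q j, le_rfl, le_rfl,
    ⟨fun i i' h => Fin.ext (hp _ i.is_le _ i'.is_le h), fun i => hpA i i.isLt⟩,
    ⟨fun j j' h => Fin.ext (hq _ j.is_le _ j'.is_le h), fun j => hqA j j.isLt⟩,
    hstart, hend, hne, fun i j h => ?_⟩
  rcases hdisj i i.is_le j j.is_le h with ⟨hi, hj⟩ | ⟨hi, hj⟩
  · exact .inl ⟨Fin.ext hi, Fin.ext hj⟩
  · exact .inr ⟨Fin.ext hi, Fin.ext hj⟩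

end HasTwoBlockCycle

namespace IsCycle

variable {n : ℕ} {c : Fin (n + 1) → V}

theorem offset_inj (hC : IsCycle A n c) (r : Fin (n + 1)) {a b : ℕ} (ha : a ≤ n) (hb : b ≤ n)
    (h : c (r + a) = c (r + b)) : a = b := by
  have := congrArg Fin.val (add_left_cancel (hC.2.1 h))
  rwa [Fin.val_cast_of_lt (by omega), Fin.val_cast_of_lt (by omega)] at this

theorem arc_offset_succ (hC : IsCycle A n c) (r : Fin (n + 1)) {a b : ℕ} (h : b = a + 1) :
    A (c (r + a)) (c (r + b)) := by
  subst h
  simpa [add_assoc] using hC.2.2 (r + a)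

theorem hasTwoBlockCycle_of_offsets (hC : IsCycle A n c) (r : Fin (n + 1)) {L M : ℕ}
    {v w : ℕ → ℕ} (hv : ∀ i ≤ L, v i ≤ n) (hw : ∀ j ≤ M, w j ≤ n)
    (hvinj : ∀ i ≤ L, ∀ i' ≤ L, v i = v i' → i = i')
    (hwinj : ∀ j ≤ M, ∀ j' ≤ M, w j = w j' → j = j')
    (hvA : ∀ i < L, A (c (r + v i)) (c (r + v (i + 1))))
    (hwA : ∀ j < M, A (c (r + w j)) (c (r + w (j + 1))))
    (hstart : v 0 = w 0) (hend : v L = w M) (hne : v 0 ≠ v L)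
    (hdisj : ∀ i ≤ L, ∀ j ≤ M, v i = w j → i = 0 ∧ j = 0 ∨ i = L ∧ j = M) :
    HasTwoBlockCycle A L M :=
  HasTwoBlockCycle.of_nat_paths (p := fun i => c (r + v i)) (q := fun j => c (r + w j))
    (fun i hi i' hi' h => hvinj i hi i' hi' (hC.offset_inj r (hv i hi) (hv i' hi') h))
    (fun j hj j' hj' h => hwinj j hj j' hj' (hC.offset_inj r (hw j hj) (hw j' hj') h))
    hvA hwA (by simp only [hstart]) (by simp only [hend])
    (fun h => hne (hC.offset_inj r (hv 0 (Nat.zero_le L)) (hv L le_rfl) h))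
    (fun i hi j hj h => hdisj i hi j hj (hC.offset_inj r (hv i hi) (hw j hj) h))

-- The two blocks: `r, r+1, …, r+d+1` and the chord.
theorem hasTwoBlockCycle_of_forwardChord (hC : IsCycle A n c) (r : Fin (n + 1)) {d : ℕ}
    (hd : d + 1 ≤ n) (hchord : A (c r) (c (r + (d + 1 : ℕ)))) :
    HasTwoBlockCycle A (d + 1) 1 := by
  have h0 : A (c (r + (0 : ℕ))) (c (r + (d + 1 : ℕ))) := by simpa using hchord
  refine hC.hasTwoBlockCycle_of_offsets r (v := fun i => i)
    (w := fun j => if j = 0 then 0 else d + 1) ?_ ?_ ?_ ?_ ?_ ?_ ?_ ?_ ?_ ?_ <;>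
  intros <;> (try split_ifs at *) <;>
    first
      | omega
      | exact hC.arc_offset_succ r (by omega)

-- The two blocks: `r, r+1, …, r+d, r+m` and `r, r+d+1, r+d+2, …, r+m`.
theorem hasTwoBlockCycle_of_forwardChord_forwardArc (hC : IsCycle A n c) (r : Fin (n + 1))
    {d m : ℕ} (hdm : d + 2 ≤ m) (hm : m ≤ n) (hchord : A (c r) (c (r + (d + 1 : ℕ))))
    (harc : A (c (r + d)) (c (r + m))) :
    HasTwoBlockCycle A (d + 1) (m - d) := by
  have h0 : A (c (r + (0 : ℕ))) (c (r + (d + 1 : ℕ))) := by simpa using hchord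
  refine hC.hasTwoBlockCycle_of_offsets r (v := fun i => if i ≤ d then i else m)
    (w := fun j => if j = 0 then 0 else d + j) ?_ ?_ ?_ ?_ ?_ ?_ ?_ ?_ ?_ ?_ <;>
  intros <;> (try split_ifs at *) <;>
    first
      | omega
      | exact hC.arc_offset_succ r (by omega)
      | (convert h0 using 4; omega)
      | (convert harc using 4; omega)

-- The two blocks: `r, r+1, …, r+d` and `r, r+d+1, r+d+2, …, r+m, r+d`.
theorem hasTwoBlockCycle_of_forwardChord_backwardArc (hC : IsCycle A n c) (r : Fin (n + 1))
    {d m : ℕ} (hd : 0 < d) (hdm : d + 2 ≤ m) (hm : m ≤ n)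
    (hchord : A (c r) (c (r + (d + 1 : ℕ)))) (harc : A (c (r + m)) (c (r + d))) :
    HasTwoBlockCycle A d (m - d + 1) := by
  have h0 : A (c (r + (0 : ℕ))) (c (r + (d + 1 : ℕ))) := by simpa using hchord
  refine hC.hasTwoBlockCycle_of_offsets r (v := fun i => i)
    (w := fun j => if j = 0 then 0 else if j ≤ m - d then d + j else d)
    ?_ ?_ ?_ ?_ ?_ ?_ ?_ ?_ ?_ ?_ <;>
  intros <;> (try split_ifs at *) <;>
    first
      | omega
      | exact hC.arc_offset_succ r (by omega)
      | (convert h0 using 4; omega)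
      | (convert harc using 4; omega)

-- The two blocks: `r+d+2, r, r+1, …, r+d, r+m` and `r+d+2, r+d+3, …, r+m`.
theorem hasTwoBlockCycle_of_backwardChord_forwardArc (hC : IsCycle A n c) (r : Fin (n + 1))
    {d m : ℕ} (hdm : d + 3 ≤ m) (hm : m ≤ n) (hchord : A (c (r + (d + 2 : ℕ))) (c r))
    (harc : A (c (r + d)) (c (r + m))) :
    HasTwoBlockCycle A (d + 2) (m - d - 2) := by
  have h0 : A (c (r + (d + 2 : ℕ))) (c (r + (0 : ℕ))) := by simpa using hchord
  refine hC.hasTwoBlockCycle_of_offsets r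
    (v := fun i => if i = 0 then d + 2 else if i ≤ d + 1 then i - 1 else m)
    (w := fun j => d + 2 + j) ?_ ?_ ?_ ?_ ?_ ?_ ?_ ?_ ?_ ?_ <;>
  intros <;> (try split_ifs at *) <;>
    first
      | omega
      | exact hC.arc_offset_succ r (by omega)
      | (convert h0 using 4; omega)
      | (convert harc using 4; omega)

-- The two blocks: `r+d+2, r, r+1, …, r+d` and `r+d+2, r+d+3, …, r+m, r+d`.
theorem hasTwoBlockCycle_of_backwardChord_backwardArc (hC : IsCycle A n c) (r : Fin (n + 1))
    {d m : ℕ} (hdm : d + 2 ≤ m) (hm : m ≤ n) (hchord : A (c (r + (d + 2 : ℕ))) (c r))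
    (harc : A (c (r + m)) (c (r + d))) :
    HasTwoBlockCycle A (d + 1) (m - d - 1) := by
  have h0 : A (c (r + (d + 2 : ℕ))) (c (r + (0 : ℕ))) := by simpa using hchord
  refine hC.hasTwoBlockCycle_of_offsets r (v := fun i => if i = 0 then d + 2 else i - 1)
    (w := fun j => if j < m - d - 1 then d + 2 + j else d) ?_ ?_ ?_ ?_ ?_ ?_ ?_ ?_ ?_ ?_ <;>
  intros <;> (try split_ifs at *) <;>
    first
      | omega
      | exact hC.arc_offset_succ r (by omega)
      | (convert h0 using 4; omega)
      | (convert harc using 4; omega)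

end IsCycle

theorem exists_offset_eq {n : ℕ} {c : Fin (n + 1) → V} (hc : Function.Surjective c)
    (r : Fin (n + 1)) (y : V) : ∃ t ≤ n, c (r + t) = y := by
  obtain ⟨x, rfl⟩ := hc y
  exact ⟨(x - r).val, Nat.lt_succ_iff.mp (x - r).isLt,
    by rw [Fin.cast_val_eq_self, add_sub_cancel]⟩

theorem SimpleGraph.exists_adj_offset_ge (G : SimpleGraph V) {n : ℕ} {c : Fin (n + 1) → V}
    (hc : Function.Surjective c) (r : Fin (n + 1)) {s N : ℕ} (hs : s < N)
    (hdeg : N ≤ (G.neighborSet (c (r + s))).ncard) :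
    ∃ t, N ≤ t ∧ t ≤ n ∧ G.Adj (c (r + s)) (c (r + t)) := by
  classical
  by_contra! hfar
  set window := (Finset.range N).image fun t : ℕ => c (r + t)
  have hs_mem : c (r + s) ∈ window := Finset.mem_image_of_mem _ (Finset.mem_range.mpr hs)
  have hsub : G.neighborSet (c (r + s)) ⊂ window := by
    refine ⟨fun y hy => ?_, fun h => G.irrefl (h hs_mem)⟩
    obtain ⟨t, htn, rfl⟩ := exists_offset_eq hc r y
    refine Finset.mem_image_of_mem _ (Finset.mem_range.mpr ?_)
    by_contra! ht
    exact hfar t ht htn hy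
  have hlt := Set.ncard_lt_ncard hsub window.finite_toSet
  rw [Set.ncard_coe_finset] at hlt
  have hwindow : window.card ≤ N := Finset.card_image_le.trans (Finset.card_range N).le
  omega

namespace IsHamCycle

variable {n : ℕ} {c : Fin (n + 1) → V} {k l : ℕ}

theorem not_forwardChord (hH : IsHamCycle A n c) (hk : 0 < k) (hl : 0 < l)
    (hdeg : ∀ v, k + l ≤ ((underlying A).neighborSet v).ncard) (hno : ¬ HasTwoBlockCycle A k l)
    (r : Fin (n + 1)) : ¬ A (c r) (c (r + (k + 1 : ℕ))) := by
  intro hchord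
  obtain rfl | hl2 := (Nat.succ_le_of_lt hl).eq_or_lt
  · -- a far neighbour of `c r` exists, so `k + 1 ≤ n`
    obtain ⟨t, ht, htn, -⟩ :=
      (underlying A).exists_adj_offset_ge hH.2 r (s := 0) (by omega) (hdeg _)
    exact hno ((hH.1.hasTwoBlockCycle_of_forwardChord r (by omega) hchord).mono
      (by omega) le_rfl)
  obtain ⟨t, ht, htn, -, hfwd | hbwd⟩ :=
    (underlying A).exists_adj_offset_ge hH.2 r (s := k) (by omega) (hdeg _)
  · exact hno ((hH.1.hasTwoBlockCycle_of_forwardChord_forwardArc r (by omega) htn hchord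
      hfwd).mono (by omega) (by omega))
  · exact hno ((hH.1.hasTwoBlockCycle_of_forwardChord_backwardArc r hk (by omega) htn hchord
      hbwd).mono le_rfl (by omega))

theorem not_backwardChord (hH : IsHamCycle A n c) (hk : 0 < k) (hl : 0 < l)
    (hdeg : ∀ v, k + l ≤ ((underlying A).neighborSet v).ncard) (hno : ¬ HasTwoBlockCycle A k l)
    (r : Fin (n + 1)) : ¬ A (c (r + (k + 1 : ℕ))) (c r) := by
  intro hchord
  obtain ⟨d, rfl⟩ : ∃ d, k = d + 1 := ⟨k - 1, by omega⟩
  obtain ⟨t, ht, htn, -, hfwd | hbwd⟩ :=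
    (underlying A).exists_adj_offset_ge hH.2 r (s := d) (by omega) (hdeg _)
  · obtain rfl | hlt := ht.eq_or_lt
    · refine hH.not_forwardChord hl hk (fun v => by simpa only [add_comm] using hdeg v)
        (fun h => hno h.symm) (r + d) ?_
      convert hfwd using 2
      push_cast
      abel
    · exact hno ((hH.1.hasTwoBlockCycle_of_backwardChord_forwardArc r (by omega) htn hchord
        hfwd).mono (by omega) (by omega))
  · exact hno ((hH.1.hasTwoBlockCycle_of_backwardChord_backwardArc r (by omega) htn hchord
      hbwd).mono le_rfl (by omega))

theorem not_adj_chord (hH : IsHamCycle A n c) (hk : 0 < k) (hl : 0 < l)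
    (hdeg : ∀ v, k + l ≤ ((underlying A).neighborSet v).ncard) (hno : ¬ HasTwoBlockCycle A k l)
    (r : Fin (n + 1)) : ¬ (underlying A).Adj (c r) (c (r + (k + 1 : ℕ))) := by
  rintro ⟨-, hfwd | hbwd⟩
  exacts [hH.not_forwardChord hk hl hdeg hno r hfwd, hH.not_backwardChord hk hl hdeg hno r hbwd]

end IsHamCycle

end

theorem no_chord_at_dist_general {V : Type u}
    (k l : ℕ) (hk : 1 ≤ k) (hl : 1 ≤ l)
    (A : V → V → Prop)
    (n : ℕ) (c : Fin (n + 1) → V) (hham : IsHamCycle A n c)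
    (hdeg : ∀ v : V, k + l ≤ ((underlying A).neighborSet v).ncard)
    (hno : ¬ HasTwoBlockCycle A k l) :
    ∀ r : Fin (n + 1),
      ¬ (underlying A).Adj (c r) (c (r + ((k + 1 : ℕ) : Fin (n + 1)))) ∧
      ¬ (underlying A).Adj (c r) (c (r + ((l + 1 : ℕ) : Fin (n + 1)))) := fun r =>
  ⟨hham.not_adj_chord hk hl hdeg hno r,
    hham.not_adj_chord hl hk (fun v => by simpa only [add_comm] using hdeg v)
      (fun h => hno h.symm) r⟩

/-- Claim 1 in the proof of Lemma 2.2.  Let `k, l` be positive integers with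
`k + l ≥ 3`, let `D` be a digraph with Hamiltonian directed cycle
`C = c 0, c 1, …, c n, c 0` (so `D` has `n + 1` vertices; indices are taken modulo
`n + 1`), and let `G` be its underlying graph.  Suppose `δ(G) ≥ k + l` and `D`
contains no two-block cycle `c(k, l)`.  Then there is no index `r` such that
`c r` and `c (r + k + 1)` are adjacent in `G`, or `c r` and `c (r + l + 1)` are
adjacent in `G`. -/
theorem no_chord_at_dist {V : Type u}
    (k l : ℕ) (hk : 1 ≤ k) (hl : 1 ≤ l) (hkl : 3 ≤ k + l)
    (A : V → V → Prop) (hirr : Irreflexive A)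
    (n : ℕ) (c : Fin (n + 1) → V) (hham : IsHamCycle A n c)
    (hdeg : ∀ v : V, k + l ≤ ((underlying A).neighborSet v).ncard)
    (hno : ¬ HasTwoBlockCycle A k l) :
    ∀ r : Fin (n + 1),
      ¬ (underlying A).Adj (c r) (c (r + ((k + 1 : ℕ) : Fin (n + 1)))) ∧
      ¬ (underlying A).Adj (c r) (c (r + ((l + 1 : ℕ) : Fin (n + 1)))) :=
  no_chord_at_dist_general k l hk hl A n c hham hdeg hno
end

section
/- Let T be a cycle-tree. Then for any two vertices u and v of T, there exists exactly one directed path in T from u to v. -/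
universe u

/-- The arc set of the directed cycle `c 0, c 1, …, c n, c 0`. -/
def CycleArcs {V : Type u} {n : ℕ} (c : Fin (n + 1) → V) : Set (V × V) :=
  {e | ∃ i : Fin (n + 1), e = (c i, c (i + 1))}

/-- `s` is the arc set of some directed cycle of the digraph `A`.
(We identify a directed cycle with its set of arcs, so that cycles differing only
by a rotation of the starting point are identified.) -/
def IsCycleSet {V : Type u} (A : V → V → Prop) (s : Set (V × V)) : Prop :=
  ∃ (n : ℕ) (c : Fin (n + 1) → V), IsCycle A n c ∧ s = CycleArcs c

/-- The vertex set of a directed cycle given by its arc set. -/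
def cycleVerts {V : Type u} (s : Set (V × V)) : Set V := Prod.fst '' s

/-- A digraph `A` is a cycle-tree: it is strongly connected and there is an
ordering `C 0, C 1, …, C (m-1)` of all of its directed cycles such that for each
`i ≥ 1`, the vertex set of `C i` meets the union of the vertex sets of the
previous cycles in exactly one vertex. -/
def IsCycleTree {V : Type u} (A : V → V → Prop) : Prop :=
  (∀ u v : V, Relation.ReflTransGen A u v) ∧
  ∃ (m : ℕ) (C : Fin m → Set (V × V)),
    Function.Injective C ∧
    (∀ i : Fin m, IsCycleSet A (C i)) ∧
    (∀ s : Set (V × V), IsCycleSet A s → ∃ i : Fin m, C i = s) ∧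
    ∀ i : Fin m, 0 < (i : ℕ) →
      ∃ x : V, cycleVerts (C i) ∩
        (⋃ (j : Fin m) (_ : (j : ℕ) < (i : ℕ)), cycleVerts (C j)) = {x}

/-- `L` is (the vertex list of) a directed path in the digraph `A`. -/
def IsListPath {V : Type u} (A : V → V → Prop) (L : List V) : Prop :=
  L ≠ [] ∧ L.Nodup ∧ L.Chain' A

/-!
Every arc `a → b` with `a ≠ b` closes up, with a path from `b` back to `a`, into a directed
cycle, so the paths of `T` are exactly the paths of the union of its cycles. Add the cycles one
at a time in the cycle-tree order: each new cycle meets the digraph built so far in at most one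
vertex `x`, so a path can only pass between the two parts through `x`. Since a path visits `x`
at most once, it is either a path of one part or splits at `x` into a path of the old part
followed by a path of the new cycle (or vice versa). Paths within a single cycle are unique
because every vertex has exactly one out-neighbour on it, hence uniqueness of paths survives
every gluing step.
-/

open List Relation

variable {V : Type*}

-- `IsListPath R L` from `u` to `v`; nonemptiness is implied by `L.head? = some u`.
def IsPathFromTo (R : V → V → Prop) (u v : V) (L : List V) : Prop :=
  L.Nodup ∧ L.IsChain R ∧ L.head? = some u ∧ L.getLast? = some v

theorem isPathFromTo_iff {R : V → V → Prop} {u v : V} {L : List V} :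
    IsPathFromTo R u v L ↔ IsListPath R L ∧ L.head? = some u ∧ L.getLast? = some v :=
  ⟨fun ⟨hnd, hch, hh, hl⟩ => ⟨⟨fun h => by simp [h] at hh, hnd, hch⟩, hh, hl⟩,
    fun ⟨⟨_, hnd, hch⟩, hh, hl⟩ => ⟨hnd, hch, hh, hl⟩⟩

def PathsUnique (R : V → V → Prop) : Prop :=
  ∀ u v : V, ∀ ⦃L L' : List V⦄, IsPathFromTo R u v L → IsPathFromTo R u v L' → L = L'

def IsSupportedOn (R : V → V → Prop) (S : Set V) : Prop :=
  ∀ ⦃a b⦄, R a b → a ∈ S ∧ b ∈ S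

namespace IsPathFromTo

variable {R R' : V → V → Prop} {S : Set V} {u v x : V} {L : List V}

theorem eq_singleton (h : IsPathFromTo R u u L) : L = [u] := by
  obtain ⟨hnd, -, hh, hl⟩ := h
  obtain ⟨t, rfl⟩ := head?_eq_some_iff.1 hh
  cases t with
  | nil => rfl
  | cons b t =>
    rw [getLast?_cons_cons] at hl
    exact absurd (mem_of_getLast? hl) (nodup_cons.1 hnd).1

theorem reverse (h : IsPathFromTo R u v L) : IsPathFromTo (flip R) v u L.reverse :=
  ⟨nodup_reverse.2 h.1, isChain_reverse.2 h.2.1, by simpa using h.2.2.2, by simpa using h.2.2.1⟩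

theorem cons_cons {b : V} {t : List V} (h : IsPathFromTo R u v (u :: b :: t)) :
    R u b ∧ IsPathFromTo R b v (b :: t) := by
  obtain ⟨hnd, hch, -, hl⟩ := h
  rw [isChain_cons_cons] at hch
  exact ⟨hch.1, (nodup_cons.1 hnd).2, hch.2, rfl, by simpa using hl⟩

theorem exists_rel_of_ne (h : IsPathFromTo R u v L) (huv : u ≠ v) : ∃ b, R u b := by
  obtain ⟨t, rfl⟩ := head?_eq_some_iff.1 h.2.2.1
  cases t with
  | nil => exact absurd (by simpa using h.2.2.2) huv
  | cons b t => exact ⟨b, h.cons_cons.1⟩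

theorem split {L₁ L₂ : List V} (h : IsPathFromTo R u v (L₁ ++ x :: L₂)) :
    IsPathFromTo R u x (L₁ ++ [x]) ∧ IsPathFromTo R x v (x :: L₂) := by
  obtain ⟨hnd, hch, hh, hl⟩ := h
  have hassoc : L₁ ++ x :: L₂ = L₁ ++ [x] ++ L₂ := by simp
  refine ⟨⟨?_, ?_, ?_, by simp⟩, ⟨?_, ?_, rfl, by simpa using hl⟩⟩
  · exact hnd.sublist (hassoc ▸ sublist_append_left _ _)
  · exact (hassoc ▸ hch).left_of_append
  · cases L₁ <;> simpa using hh
  · exact hnd.sublist (sublist_append_right _ _)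
  · exact hch.suffix (suffix_append _ _)

theorem concat (h : IsPathFromTo R u v L) (hvx : R v x) (hx : x ∉ L) :
    IsPathFromTo R u x (L ++ [x]) := by
  obtain ⟨hnd, hch, hh, hl⟩ := h
  refine ⟨nodup_append.2 ⟨hnd, nodup_singleton x, ?_⟩, ?_, ?_, by simp⟩
  · simpa using fun (a : V) ha (hax : a = x) => hx (hax ▸ ha)
  · exact hch.append (isChain_singleton x) (by simpa [hl] using hvx)
  · obtain ⟨t, rfl⟩ := head?_eq_some_iff.1 hh
    rfl

theorem exists_of_reflTransGen (h : ReflTransGen R u v) : ∃ L, IsPathFromTo R u v L := by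
  induction h with
  | refl => exact ⟨[u], nodup_singleton u, isChain_singleton u, rfl, rfl⟩
  | @tail b c _ hbc ih =>
    obtain ⟨L, hL⟩ := ih
    by_cases hc : c ∈ L
    · obtain ⟨L₁, L₂, rfl⟩ := append_of_mem hc
      exact ⟨_, hL.split.1⟩
    · exact ⟨_, hL.concat hbc hc⟩

theorem mono_of_ne (H : ∀ a ∈ L, ∀ b ∈ L, a ≠ b → R a b → R' a b)
    (h : IsPathFromTo R u v L) : IsPathFromTo R' u v L := by
  obtain ⟨hnd, hch, hh, hl⟩ := h
  refine ⟨hnd, ?_, hh, hl⟩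
  clear hh hl
  induction hch with
  | nil => exact .nil
  | singleton a => exact .singleton a
  | cons_cons hab _ ih =>
    have hnd' := nodup_cons.1 hnd
    refine .cons_cons (H _ mem_cons_self _ (by simp) (fun h => hnd'.1 (h ▸ mem_cons_self)) hab)
      (ih (fun a ha b hb => H a (mem_cons_of_mem _ ha) b (mem_cons_of_mem _ hb)) hnd'.2)

theorem forall_mem_of_head_mem (hS : ∀ a b, R a b → a ∈ S → a ≠ x → b ∈ S)
    (h : IsPathFromTo R u v L) (hu : u ∈ S) (hx : x ∉ L.dropLast) : ∀ w ∈ L, w ∈ S := by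
  obtain ⟨t, rfl⟩ := head?_eq_some_iff.1 h.2.2.1
  induction t generalizing u with
  | nil => simpa using hu
  | cons b t ih =>
    obtain ⟨hub, h'⟩ := h.cons_cons
    rw [dropLast_cons_cons, mem_cons, not_or] at hx
    have hb : b ∈ S := hS u b hub hu (Ne.symm hx.1)
    simpa [hu] using ih hb h' hx.2

theorem forall_mem_of_getLast_mem (hS : ∀ a b, R a b → b ∈ S → b ≠ x → a ∈ S)
    (h : IsPathFromTo R u v L) (hv : v ∈ S) (hx : x ∉ L.tail) : ∀ w ∈ L, w ∈ S := by
  simpa using h.reverse.forall_mem_of_head_mem (fun a b hab => hS b a hab) hv (by simpa using hx)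

theorem forall_mem_of_closed (hfwd : ∀ a b, R a b → a ∈ S → a ≠ x → b ∈ S)
    (hbwd : ∀ a b, R a b → b ∈ S → b ≠ x → a ∈ S) (h : IsPathFromTo R u v L)
    (hu : u ∈ S) (hv : v ∈ S) : ∀ w ∈ L, w ∈ S := by
  by_cases hxL : x ∈ L
  · obtain ⟨L₁, L₂, rfl⟩ := append_of_mem hxL
    have hx : x ∉ L₁ ∧ x ∉ L₂ := by simpa using (nodup_cons.1 (nodup_middle.1 h.1)).1
    obtain ⟨h₁, h₂⟩ := h.split
    intro w hw
    rcases mem_append.1 hw with hw | hw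
    · exact h₁.forall_mem_of_head_mem hfwd hu (by simpa using hx.1) w (mem_append_left _ hw)
    · exact h₂.forall_mem_of_getLast_mem hbwd hv (by simpa using hx.2) w hw
  · exact h.forall_mem_of_head_mem hfwd hu (fun hx => hxL (dropLast_subset _ hx))

end IsPathFromTo

section Sup

variable {R₁ R₂ : V → V → Prop} {S₁ S₂ : Set V} {x u v : V} {L : List V}

theorem IsSupportedOn.mem_of_sup_rel (hR₁ : IsSupportedOn R₁ S₁) (hR₂ : IsSupportedOn R₂ S₂)
    (hS : S₁ ∩ S₂ ⊆ {x}) {a b : V} (hab : (R₁ ⊔ R₂) a b) :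
    (a ∈ S₁ → a ≠ x → b ∈ S₁) ∧ (b ∈ S₁ → b ≠ x → a ∈ S₁) := by
  rcases hab with hab | hab
  · exact ⟨fun _ _ => (hR₁ hab).2, fun _ _ => (hR₁ hab).1⟩
  · exact ⟨fun ha hax => absurd (hS ⟨ha, (hR₂ hab).1⟩) hax,
      fun hb hbx => absurd (hS ⟨hb, (hR₂ hab).2⟩) hbx⟩

theorem IsPathFromTo.of_sup_of_forall_mem (hR₂ : IsSupportedOn R₂ S₂) (hS : S₁ ∩ S₂ ⊆ {x})
    (h : IsPathFromTo (R₁ ⊔ R₂) u v L) (hL : ∀ w ∈ L, w ∈ S₁) : IsPathFromTo R₁ u v L :=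
  h.mono_of_ne fun a ha b hb hne hab => hab.resolve_right fun hab =>
    hne ((hS ⟨hL a ha, (hR₂ hab).1⟩).trans (hS ⟨hL b hb, (hR₂ hab).2⟩).symm)

theorem IsPathFromTo.of_sup_of_mem (hR₁ : IsSupportedOn R₁ S₁) (hR₂ : IsSupportedOn R₂ S₂)
    (hS : S₁ ∩ S₂ ⊆ {x}) (h : IsPathFromTo (R₁ ⊔ R₂) u v L) (hu : u ∈ S₁) (hv : v ∈ S₁) :
    IsPathFromTo R₁ u v L :=
  h.of_sup_of_forall_mem hR₂ hS <| h.forall_mem_of_closed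
    (fun _ _ hab => (hR₁.mem_of_sup_rel hR₂ hS hab).1)
    (fun _ _ hab => (hR₁.mem_of_sup_rel hR₂ hS hab).2) hu hv

theorem IsPathFromTo.exists_split_of_sup (hR₁ : IsSupportedOn R₁ S₁)
    (hR₂ : IsSupportedOn R₂ S₂) (hS : S₁ ∩ S₂ ⊆ {x}) (h : IsPathFromTo (R₁ ⊔ R₂) u v L)
    (hu : u ∈ S₁) (hv : v ∈ S₂) (hv₁ : v ∉ S₁) :
    ∃ L₁ L₂, L = L₁ ++ x :: L₂ ∧
      IsPathFromTo R₁ u x (L₁ ++ [x]) ∧ IsPathFromTo R₂ x v (x :: L₂) := by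
  have hS' : S₂ ∩ S₁ ⊆ {x} := Set.inter_comm S₁ S₂ ▸ hS
  have hfwd := fun a b hab => (hR₁.mem_of_sup_rel hR₂ hS (a := a) (b := b) hab).1
  have hxL : x ∈ L := by
    by_contra hxL
    exact hv₁ (h.forall_mem_of_head_mem hfwd hu (fun hx => hxL (dropLast_subset _ hx)) v
      (mem_of_getLast? h.2.2.2))
  obtain ⟨L₁, L₂, rfl⟩ := append_of_mem hxL
  have hx : x ∉ L₁ ∧ x ∉ L₂ := by simpa using (nodup_cons.1 (nodup_middle.1 h.1)).1
  obtain ⟨h₁, h₂⟩ := h.split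
  rw [sup_comm] at h₂
  refine ⟨L₁, L₂, rfl, h₁.of_sup_of_forall_mem hR₂ hS ?_, h₂.of_sup_of_forall_mem hR₁ hS' ?_⟩
  · exact h₁.forall_mem_of_head_mem hfwd hu (by simpa using hx.1)
  · exact h₂.forall_mem_of_getLast_mem (fun _ _ hab => (hR₂.mem_of_sup_rel hR₁ hS' hab).2) hv
      (by simpa using hx.2)

theorem PathsUnique.eq_of_sup_of_mem (h₁ : PathsUnique R₁) (h₂ : PathsUnique R₂)
    (hR₁ : IsSupportedOn R₁ S₁) (hR₂ : IsSupportedOn R₂ S₂) (hS : S₁ ∩ S₂ ⊆ {x})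
    (hu : u ∈ S₁) {L L' : List V} (hL : IsPathFromTo (R₁ ⊔ R₂) u v L)
    (hL' : IsPathFromTo (R₁ ⊔ R₂) u v L') : L = L' := by
  by_cases hv₁ : v ∈ S₁
  · exact h₁ u v (hL.of_sup_of_mem hR₁ hR₂ hS hu hv₁) (hL'.of_sup_of_mem hR₁ hR₂ hS hu hv₁)
  have hv : v ∈ S₂ := by
    obtain ⟨a, ha | ha⟩ := hL.reverse.exists_rel_of_ne fun h => hv₁ (h ▸ hu)
    exacts [absurd (hR₁ ha).2 hv₁, (hR₂ ha).2]
  obtain ⟨L₁, L₂, rfl, hP, hQ⟩ := hL.exists_split_of_sup hR₁ hR₂ hS hu hv hv₁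
  obtain ⟨L₁', L₂', rfl, hP', hQ'⟩ := hL'.exists_split_of_sup hR₁ hR₂ hS hu hv hv₁
  obtain rfl : L₁ = L₁' := append_cancel_right (h₁ u x hP hP')
  obtain rfl : L₂ = L₂' := (cons_inj_right x).1 (h₂ x v hQ hQ')
  rfl

theorem PathsUnique.sup (h₁ : PathsUnique R₁) (h₂ : PathsUnique R₂)
    (hR₁ : IsSupportedOn R₁ S₁) (hR₂ : IsSupportedOn R₂ S₂) (hS : (S₁ ∩ S₂).Subsingleton) :
    PathsUnique (R₁ ⊔ R₂) := by
  intro u v L L' hL hL'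
  obtain ⟨x, hx⟩ : ∃ x, S₁ ∩ S₂ ⊆ {x} := by
    rcases hS.eq_empty_or_singleton with h | ⟨x, h⟩
    exacts [⟨u, h ▸ Set.empty_subset _⟩, ⟨x, h.le⟩]
  by_cases hu₁ : u ∈ S₁
  · exact h₁.eq_of_sup_of_mem h₂ hR₁ hR₂ hx hu₁ hL hL'
  by_cases hu₂ : u ∈ S₂
  · rw [sup_comm] at hL hL'
    exact h₂.eq_of_sup_of_mem h₁ hR₂ hR₁ (Set.inter_comm S₁ S₂ ▸ hx) hu₂ hL hL'
  obtain rfl : u = v := by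
    by_contra huv
    obtain ⟨b, hb | hb⟩ := hL.exists_rel_of_ne huv
    exacts [hu₁ (hR₁ hb).1, hu₂ (hR₂ hb).1]
  rw [hL.eq_singleton, hL'.eq_singleton]

end Sup

theorem pathsUnique_of_rightUnique {R : V → V → Prop} (hR : Relator.RightUnique R) :
    PathsUnique R := by
  intro u v L L' hL hL'
  obtain ⟨t, rfl⟩ := head?_eq_some_iff.1 hL.2.2.1
  obtain ⟨t', rfl⟩ := head?_eq_some_iff.1 hL'.2.2.1
  induction t generalizing u t' with
  | nil =>
    obtain rfl : u = v := by simpa using hL.2.2.2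
    exact hL'.eq_singleton.symm
  | cons b s ih =>
    cases t' with
    | nil =>
      obtain rfl : u = v := by simpa using hL'.2.2.2
      exact hL.eq_singleton
    | cons b' s' =>
      obtain ⟨hub, hL₁⟩ := hL.cons_cons
      obtain ⟨hub', hL₁'⟩ := hL'.cons_cons
      obtain rfl := hR hub hub'
      rw [ih _ hL₁ _ hL₁']

section Cycles

variable {A : V → V → Prop} {s : Set (V × V)}

theorem IsCycleSet.isSupportedOn (hs : IsCycleSet A s) :
    IsSupportedOn (fun a b => (a, b) ∈ s) (cycleVerts s) := by
  obtain ⟨n, c, -, rfl⟩ := hs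
  rintro a b ⟨i, hi⟩
  obtain ⟨rfl, rfl⟩ := Prod.mk.inj hi
  exact ⟨⟨_, ⟨i, rfl⟩, rfl⟩, ⟨_, ⟨i + 1, rfl⟩, rfl⟩⟩

theorem IsCycleSet.rightUnique (hs : IsCycleSet A s) :
    Relator.RightUnique fun a b => (a, b) ∈ s := by
  obtain ⟨n, c, ⟨-, hinj, -⟩, rfl⟩ := hs
  rintro a b b' ⟨i, hi⟩ ⟨j, hj⟩
  obtain ⟨rfl, rfl⟩ := Prod.mk.inj hi
  obtain ⟨hij, rfl⟩ := Prod.mk.inj hj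
  rw [hinj hij]

theorem IsPathFromTo.exists_isCycleSet_mem {a b : V} {L : List V} (hL : IsPathFromTo A b a L)
    (hab : A a b) (hne : a ≠ b) : ∃ s, IsCycleSet A s ∧ (a, b) ∈ s := by
  obtain ⟨hnd, hch, hh, hl⟩ := hL
  rw [head?_eq_getElem?] at hh
  rw [getLast?_eq_getElem?] at hl
  obtain ⟨hL0, hb⟩ := List.getElem?_eq_some_iff.1 hh
  obtain ⟨n, hn⟩ : ∃ n, L.length = n + 1 := ⟨L.length - 1, by omega⟩
  simp only [hn, Nat.add_sub_cancel] at hl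
  obtain ⟨_, ha⟩ := List.getElem?_eq_some_iff.1 hl
  let c : Fin (n + 1) → V := fun i => L[(i : ℕ)]'(by omega)
  have hc0 : c 0 = b := hb
  have hcn : c (Fin.last n) = a := ha
  refine ⟨CycleArcs c, ⟨n, c, ⟨?_, ?_, ?_⟩, rfl⟩, Fin.last n, by rw [Fin.last_add_one, hc0, hcn]⟩
  · rcases Nat.eq_zero_or_pos n with rfl | hn0
    · exact absurd (hcn.symm.trans hc0) hne
    · exact hn0
  · exact fun i j hij => Fin.ext ((hnd.getElem_inj_iff).1 hij)
  · intro i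
    by_cases hi : i = Fin.last n
    · rwa [hi, Fin.last_add_one, hc0, hcn]
    · have hi1 : ((i + 1 : Fin (n + 1)) : ℕ) = i + 1 :=
        Fin.val_add_one_of_lt (Fin.lt_last_iff_ne_last.2 hi)
      simp only [c, hi1]
      exact hch.getElem _ _

end Cycles

section CycleTree

variable {A : V → V → Prop} {m : ℕ} {C : Fin m → Set (V × V)}

def arcsBefore (C : Fin m → Set (V × V)) (k : ℕ) (a b : V) : Prop :=
  ∃ i : Fin m, (i : ℕ) < k ∧ (a, b) ∈ C i

def vertsBefore (C : Fin m → Set (V × V)) (k : ℕ) : Set V :=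
  ⋃ (j : Fin m) (_ : (j : ℕ) < k), cycleVerts (C j)

theorem arcsBefore_succ {k : ℕ} (hk : k < m) :
    arcsBefore C (k + 1) = arcsBefore C k ⊔ fun a b => (a, b) ∈ C ⟨k, hk⟩ := by
  ext a b
  simp only [arcsBefore, Pi.sup_apply, sup_Prop_eq, Nat.lt_succ_iff_lt_or_eq, or_and_right,
    exists_or]
  refine or_congr_right ⟨fun ⟨i, hi, hab⟩ => ?_, fun hab => ⟨_, rfl, hab⟩⟩
  rwa [← show i = ⟨k, hk⟩ from Fin.ext hi]

theorem isSupportedOn_arcsBefore (hC : ∀ i, IsCycleSet A (C i)) (k : ℕ) :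
    IsSupportedOn (arcsBefore C k) (vertsBefore C k) := by
  rintro a b ⟨i, hi, hab⟩
  obtain ⟨ha, hb⟩ := (hC i).isSupportedOn hab
  exact ⟨Set.mem_biUnion hi ha, Set.mem_biUnion hi hb⟩

theorem pathsUnique_arcsBefore (hC : ∀ i, IsCycleSet A (C i))
    (hsep : ∀ i : Fin m, 0 < (i : ℕ) → ∃ x, cycleVerts (C i) ∩ vertsBefore C i = {x}) :
    ∀ k ≤ m, PathsUnique (arcsBefore C k)
  | 0, _ => pathsUnique_of_rightUnique fun _ _ _ ⟨_, hi, _⟩ => absurd hi (Nat.not_lt_zero _)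
  | k + 1, hk => by
    rw [arcsBefore_succ (by omega)]
    refine (pathsUnique_arcsBefore hC hsep k (by omega)).sup
      (pathsUnique_of_rightUnique (hC _).rightUnique) (isSupportedOn_arcsBefore hC k)
      (hC _).isSupportedOn ?_
    rw [Set.inter_comm]
    rcases Nat.eq_zero_or_pos k with rfl | hk0
    · simp [vertsBefore]
    · obtain ⟨x, hx⟩ := hsep ⟨k, by omega⟩ hk0
      rw [hx]
      exact Set.subsingleton_singleton

end CycleTree

/-- Let `T` be a cycle-tree.  Then for any two vertices `u` and `v` of `T`,
there exists exactly one directed path in `T` from `u` to `v`. -/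
theorem cycleTree_unique_path {V : Type u} (A : V → V → Prop)
    (h : IsCycleTree A) (u v : V) :
    ∃! L : List V, IsListPath A L ∧ L.head? = some u ∧ L.getLast? = some v := by
  obtain ⟨hconn, m, C, -, hC, hall, hsep⟩ := h
  have hA : ∀ a b, a ≠ b → A a b → arcsBefore C m a b := by
    intro a b hne hab
    obtain ⟨L, hL⟩ := IsPathFromTo.exists_of_reflTransGen (hconn b a)
    obtain ⟨s, hs, hmem⟩ := hL.exists_isCycleSet_mem hab hne
    obtain ⟨i, rfl⟩ := hall s hs
    exact ⟨i, i.isLt, hmem⟩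
  have hpath : ∀ L, IsPathFromTo A u v L → IsPathFromTo (arcsBefore C m) u v L :=
    fun L hL => hL.mono_of_ne fun a _ b _ => hA a b
  obtain ⟨L, hL⟩ := IsPathFromTo.exists_of_reflTransGen (hconn u v)
  refine ⟨L, isPathFromTo_iff.1 hL, fun L' hL' => ?_⟩
  exact pathsUnique_arcsBefore hC hsep m le_rfl u v (hpath L' (isPathFromTo_iff.2 hL')) (hpath L hL)
end
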